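/- Let M be a weight sequence satisfying (M.2) with constants C_0, H, let h, κ > 0, and let E be a Banach space. Let f ∈ C^∞(ℝ^d;E) satisfy ‖f‖_{κ,h} := sup_α sup_x h^{|α|}‖∂^α f(x)‖_E e^{−κ|x|}/M_α < ∞, and let (g_α)_{α∈ℕ^d} be a family of continuous functions on ℝ^d with S := Σ_{α∈ℕ^d} M_α ‖g_α e^{κ|·|}‖_{L¹} (H/h)^{|α|} < ∞. Then the series F(x) := Σ_{α∈ℕ^d} ∫_{ℝ^d} g_α(t) ∂^α f(x−t) dt converges absolutely for every x, F ∈ C^∞(ℝ^d;E), and ‖F‖_{κ,h/H} := sup_α sup_x (h/H)^{|α|}‖∂^α F(x)‖_E e^{−κ|x|}/M_α ≤ C_0 S ‖f‖_{κ,h}. -/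

import Mathlib

/-!
Write `F_γ(x) = ∑_α ∫ g_α(t) ∂^{α+γ} f(x - t) dt`, so that `F = F_0`. Since
`e^{κ|x-t|} ≤ e^{κ|x|} e^{κ|t|}`, the `α`-th term of `F_γ` is bounded by
`C_{|α|+|γ|} e^{κ|x|} ‖g_α e^{κ|·|}‖_{L¹}` with `C_p = ‖f‖_{κ,h} M_p / h^p`, and (M.2) splits this
into `C₀ ‖f‖_{κ,h} M_{|γ|} (H/h)^{|γ|} e^{κ|x|}` times the `α`-th term of `S`. The same bound, up
to a factor `d`, holds for the term-wise derivatives (differentiation under the integral sign),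
which are the terms of the `F_{γ+e_j}`. So the series converge locally uniformly together with their
derivatives, `∂_j F_γ = F_{γ+e_j}`, hence `F` is smooth with `∂^β F = F_β`, and the bound on `F_β`
is the claimed estimate.
-/

open Filter MeasureTheory
open scoped BigOperators

noncomputable section

abbrev Rd (d : ℕ) := EuclideanSpace ℝ (Fin d)

/-- Partial derivative in the `j`-th coordinate direction. -/
def dop {d : ℕ} {E : Type*} [NormedAddCommGroup E] [NormedSpace ℝ E]
    (j : Fin d) (f : Rd d → E) : Rd d → E :=
  fun x => fderiv ℝ f x (EuclideanSpace.single j (1:ℝ))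

/-- Iterated partial derivative `∂^α` for a multi-index `α : Fin d → ℕ`. -/
def pD {d : ℕ} {E : Type*} [NormedAddCommGroup E] [NormedSpace ℝ E]
    (α : Fin d → ℕ) (f : Rd d → E) : Rd d → E :=
  (List.finRange d).foldr (fun j g => (dop j)^[α j] g) f

/-- Length `|α|` of a multi-index. -/
def msize {d : ℕ} (α : Fin d → ℕ) : ℕ := ∑ j, α j

/-- `M` is a weight sequence: positive, normalized, `M_p^{1/p} → ∞`, log-convex. -/
def IsWeightSeq (M : ℕ → ℝ) : Prop :=
  (∀ p, 0 < M p) ∧ M 0 = 1 ∧ M 1 = 1 ∧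
  Tendsto (fun p : ℕ => (M p) ^ ((p : ℝ)⁻¹)) atTop atTop ∧
  ∀ p : ℕ, 1 ≤ p → (M p)^2 ≤ M (p-1) * M (p+1)

/-- Condition (M.2) with explicit constants `C₀, H ≥ 1`. -/
def HasM2 (M : ℕ → ℝ) (C₀ H : ℝ) : Prop :=
  1 ≤ C₀ ∧ 1 ≤ H ∧ ∀ p q : ℕ, M (p+q) ≤ C₀ * H^(p+q) * M p * M q

/-- Condition (M.2). -/
def M2 (M : ℕ → ℝ) : Prop := ∃ C₀ H, HasM2 M C₀ H

/-- Condition (M.2)*: `2 m_p ≤ m_{Np}` for `p ≥ p₀`. -/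
def M2star (M : ℕ → ℝ) : Prop :=
  ∃ p₀ N : ℕ, 0 < p₀ ∧ 0 < N ∧
    ∀ p, p₀ ≤ p → 2 * (M p / M (p-1)) ≤ M (N*p) / M (N*p - 1)

/-- Associated function `ν_M(t) = sup_p log(t^p / M_p)`. -/
def nuA (M : ℕ → ℝ) (t : ℝ) : ℝ := ⨆ p : ℕ, Real.log (t ^ p / M p)

open scoped ContDiff

theorem msize_add {d : ℕ} (α β : Fin d → ℕ) : msize (α + β) = msize α + msize β := by
  simp [msize, Finset.sum_add_distrib]

theorem msize_single {d : ℕ} (j : Fin d) : msize (Pi.single j 1 : Fin d → ℕ) = 1 := by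
  simp [msize, Pi.single_apply]

section PartialDerivatives

variable {d : ℕ} {E : Type*} [NormedAddCommGroup E] [NormedSpace ℝ E]

theorem contDiff_dop {f : Rd d → E} (hf : ContDiff ℝ ∞ f) (j : Fin d) :
    ContDiff ℝ ∞ (dop j f) :=
  (hf.fderiv_right le_rfl).clm_apply contDiff_const

theorem contDiff_iterate_dop {f : Rd d → E} (hf : ContDiff ℝ ∞ f) (j : Fin d) (n : ℕ) :
    ContDiff ℝ ∞ ((dop j)^[n] f) := by
  induction n with
  | zero => exact hf
  | succ n ih => rw [Function.iterate_succ_apply']; exact contDiff_dop ih j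

theorem contDiff_foldr_iterate_dop {f : Rd d → E} (hf : ContDiff ℝ ∞ f) (β : Fin d → ℕ)
    (l : List (Fin d)) : ContDiff ℝ ∞ (l.foldr (fun j g => (dop j)^[β j] g) f) := by
  induction l with
  | nil => exact hf
  | cons a l ih => exact contDiff_iterate_dop ih a (β a)

theorem contDiff_pD {f : Rd d → E} (hf : ContDiff ℝ ∞ f) (β : Fin d → ℕ) :
    ContDiff ℝ ∞ (pD β f) :=
  contDiff_foldr_iterate_dop hf β _

theorem dop_comm {f : Rd d → E} (hf : ContDiff ℝ ∞ f) (i j : Fin d) :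
    dop i (dop j f) = dop j (dop i f) := by
  funext x
  have hf' : ContDiff ℝ ∞ (fderiv ℝ f) := hf.fderiv_right le_rfl
  have hdiff : Differentiable ℝ (fderiv ℝ f) := hf'.differentiable (by simp)
  have happly : ∀ v w : Rd d,
      fderiv ℝ (fun y => fderiv ℝ f y w) x v = fderiv ℝ (fderiv ℝ f) x v w := fun v w => by
    rw [fderiv_clm_apply (hdiff x) (differentiableAt_const w)]
    simp
  change fderiv ℝ (fun y => fderiv ℝ f y _) x _ = fderiv ℝ (fun y => fderiv ℝ f y _) x _
  rw [happly, happly]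
  exact (hf.contDiffAt.isSymmSndFDerivAt (by simpa using ENat.LEInfty.out)).eq _ _

theorem dop_iterate_comm {f : Rd d → E} (hf : ContDiff ℝ ∞ f) (i j : Fin d) (n : ℕ) :
    dop i ((dop j)^[n] f) = (dop j)^[n] (dop i f) := by
  induction n with
  | zero => rfl
  | succ n ih =>
    rw [Function.iterate_succ_apply', Function.iterate_succ_apply',
      dop_comm (contDiff_iterate_dop hf j n), ih]

theorem dop_foldr_iterate_dop {f : Rd d → E} (hf : ContDiff ℝ ∞ f) (γ : Fin d → ℕ) {j : Fin d}
    {l : List (Fin d)} (hl : l.Nodup) (hj : j ∈ l) :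
    dop j (l.foldr (fun i g => (dop i)^[γ i] g) f) =
      l.foldr (fun i g => (dop i)^[(γ + Pi.single j 1 : Fin d → ℕ) i] g) f := by
  induction l with
  | nil => simp at hj
  | cons a l ih =>
    obtain ⟨ha, hl⟩ := List.nodup_cons.1 hl
    simp only [List.foldr_cons]
    by_cases haj : a = j
    · subst haj
      have hrest : l.foldr (fun i g => (dop i)^[(γ + Pi.single a 1 : Fin d → ℕ) i] g) f =
          l.foldr (fun i g => (dop i)^[γ i] g) f :=
        List.foldr_ext _ _ _ fun i hi _ => by
          rw [Pi.add_apply, Pi.single_eq_of_ne (ne_of_mem_of_not_mem hi ha), add_zero]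
      rw [hrest, Pi.add_apply, Pi.single_eq_same, ← Function.iterate_succ_apply' (dop a)]
    · rw [dop_iterate_comm (contDiff_foldr_iterate_dop hf γ l),
        ih hl ((List.mem_cons.1 hj).resolve_left (Ne.symm haj)), Pi.add_apply,
        Pi.single_eq_of_ne haj, add_zero]

theorem dop_pD {f : Rd d → E} (hf : ContDiff ℝ ∞ f) (γ : Fin d → ℕ) (j : Fin d) :
    dop j (pD γ f) = pD (γ + Pi.single j 1) f :=
  dop_foldr_iterate_dop hf γ (List.nodup_finRange d) (List.mem_finRange j)

theorem fderiv_apply_eq_sum_dop (f : Rd d → E) (x y : Rd d) :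
    fderiv ℝ f x y = ∑ j, y j • dop j f x := by
  conv_lhs => rw [← (EuclideanSpace.basisFun (Fin d) ℝ).sum_repr y]
  simp [dop]

theorem norm_fderiv_le_sum_norm_dop (f : Rd d → E) (x : Rd d) :
    ‖fderiv ℝ f x‖ ≤ ∑ j, ‖dop j f x‖ := by
  refine ContinuousLinearMap.opNorm_le_bound _ (by positivity) fun y => ?_
  rw [fderiv_apply_eq_sum_dop, Finset.sum_mul]
  refine (norm_sum_le _ _).trans (Finset.sum_le_sum fun j _ => ?_)
  rw [norm_smul, mul_comm]
  exact mul_le_mul_of_nonneg_left (PiLp.norm_apply_le y j) (norm_nonneg _)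

theorem foldr_iterate_dop_of_dop_eq {V : (Fin d → ℕ) → Rd d → E}
    (hV : ∀ γ j, dop j (V γ) = V (γ + Pi.single j 1)) (β γ : Fin d → ℕ) (l : List (Fin d)) :
    l.foldr (fun i g => (dop i)^[β i] g) (V γ) =
      V (γ + (l.map fun j => Pi.single j (β j)).sum) := by
  have hiter : ∀ γ j n, (dop j)^[n] (V γ) = V (γ + Pi.single j n) := by
    intro γ j n
    induction n generalizing γ with
    | zero => simp
    | succ n ih =>
      rw [Function.iterate_succ_apply, hV, ih, add_assoc, ← Pi.single_add, add_comm 1 n]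
  induction l with
  | nil => simp
  | cons a l ih =>
    rw [List.foldr_cons, ih, hiter, List.map_cons, List.sum_cons, add_assoc,
      add_comm (List.sum _)]

theorem pD_of_dop_eq {V : (Fin d → ℕ) → Rd d → E}
    (hV : ∀ γ j, dop j (V γ) = V (γ + Pi.single j 1)) (β γ : Fin d → ℕ) :
    pD β (V γ) = V (γ + β) := by
  rw [pD, foldr_iterate_dop_of_dop_eq hV, ← Fin.sum_univ_def, Finset.univ_sum_single]

theorem contDiff_of_dop_eq {V : (Fin d → ℕ) → Rd d → E} (hdiff : ∀ γ, Differentiable ℝ (V γ))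
    (hV : ∀ γ j, dop j (V γ) = V (γ + Pi.single j 1)) (γ : Fin d → ℕ) :
    ContDiff ℝ ∞ (V γ) := by
  suffices ∀ n : ℕ, ∀ γ, ContDiff ℝ n (V γ) from contDiff_infty.2 fun n => this n γ
  intro n
  induction n with
  | zero => exact fun γ => contDiff_zero.2 (hdiff γ).continuous
  | succ n ih =>
    intro γ
    rw [Nat.cast_succ]
    refine contDiff_succ_iff_fderiv_apply.2 ⟨hdiff γ, by simp, fun y => ?_⟩
    simp only [fderiv_apply_eq_sum_dop, hV]
    exact ContDiff.sum fun j _ => (ih _).const_smul (y j)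

theorem norm_fderiv_pD_le {f : Rd d → E} {C : ℕ → ℝ} {κ : ℝ} (hf : ContDiff ℝ ∞ f)
    (hfC : ∀ δ y, ‖pD δ f y‖ ≤ C (msize δ) * Real.exp (κ * ‖y‖)) (δ : Fin d → ℕ) (y : Rd d) :
    ‖fderiv ℝ (pD δ f) y‖ ≤ d * C (msize δ + 1) * Real.exp (κ * ‖y‖) := by
  refine (norm_fderiv_le_sum_norm_dop _ y).trans ?_
  calc ∑ j, ‖dop j (pD δ f) y‖ ≤ ∑ _j : Fin d, C (msize δ + 1) * Real.exp (κ * ‖y‖) := by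
        gcongr with j
        have := hfC (δ + Pi.single j 1) y
        rwa [msize_add, msize_single, ← dop_pD hf] at this
    _ = d * C (msize δ + 1) * Real.exp (κ * ‖y‖) := by simp [mul_assoc]

end PartialDerivatives

section WeightedConvolution

variable {X F : Type*} [NormedAddCommGroup X] [NormedAddCommGroup F] [NormedSpace ℂ F]
  {g : X → ℂ} {κ A : ℝ} {u : X → F}

theorem norm_smul_comp_sub_le (hκ : 0 ≤ κ) (hu : ∀ y, ‖u y‖ ≤ A * Real.exp (κ * ‖y‖))
    {x : X} {R : ℝ} (hx : ‖x‖ ≤ R) (t : X) :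
    ‖g t • u (x - t)‖ ≤ A * Real.exp (κ * R) * (‖g t‖ * Real.exp (κ * ‖t‖)) := by
  have hA : 0 ≤ A := by simpa using (norm_nonneg _).trans (hu 0)
  have hexp : Real.exp (κ * ‖x - t‖) ≤ Real.exp (κ * R) * Real.exp (κ * ‖t‖) := by
    rw [← Real.exp_add, ← mul_add]
    gcongr
    exact (norm_sub_le x t).trans (by gcongr)
  calc ‖g t • u (x - t)‖ = ‖g t‖ * ‖u (x - t)‖ := norm_smul _ _
    _ ≤ ‖g t‖ * (A * (Real.exp (κ * R) * Real.exp (κ * ‖t‖))) := by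
        gcongr; exact (hu _).trans (by gcongr)
    _ = A * Real.exp (κ * R) * (‖g t‖ * Real.exp (κ * ‖t‖)) := by ring

variable [MeasurableSpace X] [BorelSpace X] [SecondCountableTopology X] {μ : Measure X}

theorem integrable_smul_comp_sub (hκ : 0 ≤ κ) (hg : Continuous g)
    (hgint : Integrable (fun t => ‖g t‖ * Real.exp (κ * ‖t‖)) μ) (huc : Continuous u)
    (hu : ∀ y, ‖u y‖ ≤ A * Real.exp (κ * ‖y‖)) (x : X) :
    Integrable (fun t => g t • u (x - t)) μ :=
  (hgint.const_mul _).mono' (hg.smul (huc.comp (continuous_sub_left x))).aestronglyMeasurable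
    (Eventually.of_forall (norm_smul_comp_sub_le hκ hu le_rfl))

theorem integral_norm_smul_comp_sub_le (hκ : 0 ≤ κ) (hg : Continuous g)
    (hgint : Integrable (fun t => ‖g t‖ * Real.exp (κ * ‖t‖)) μ) (huc : Continuous u)
    (hu : ∀ y, ‖u y‖ ≤ A * Real.exp (κ * ‖y‖)) {x : X} {R : ℝ} (hx : ‖x‖ ≤ R) :
    ∫ t, ‖g t • u (x - t)‖ ∂μ ≤ A * Real.exp (κ * R) * ∫ t, ‖g t‖ * Real.exp (κ * ‖t‖) ∂μ := by
  rw [← integral_const_mul]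
  exact integral_mono (integrable_smul_comp_sub hκ hg hgint huc hu x).norm (hgint.const_mul _)
    (norm_smul_comp_sub_le hκ hu hx)

theorem hasFDerivAt_integral_smul_comp_sub [NormedSpace ℝ X] {B : ℝ} (hκ : 0 ≤ κ)
    (hg : Continuous g) (hgint : Integrable (fun t => ‖g t‖ * Real.exp (κ * ‖t‖)) μ)
    (hu1 : ContDiff ℝ 1 u) (hu : ∀ y, ‖u y‖ ≤ A * Real.exp (κ * ‖y‖))
    (hu' : ∀ y, ‖fderiv ℝ u y‖ ≤ B * Real.exp (κ * ‖y‖)) (x₀ : X) :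
    HasFDerivAt (fun x => ∫ t, g t • u (x - t) ∂μ) (∫ t, g t • fderiv ℝ u (x₀ - t) ∂μ) x₀ := by
  have hu'c : Continuous (fderiv ℝ u) := hu1.continuous_fderiv one_ne_zero
  refine hasFDerivAt_integral_of_dominated_of_fderiv_le
    (F' := fun x t => g t • fderiv ℝ u (x - t))
    (bound := fun t => B * Real.exp (κ * (‖x₀‖ + 1)) * (‖g t‖ * Real.exp (κ * ‖t‖)))
    (Metric.ball_mem_nhds x₀ one_pos)
    (Eventually.of_forall fun x =>
      (integrable_smul_comp_sub hκ hg hgint hu1.continuous hu x).aestronglyMeasurable)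
    (integrable_smul_comp_sub hκ hg hgint hu1.continuous hu x₀)
    (hg.smul (hu'c.comp (continuous_sub_left x₀))).aestronglyMeasurable
    (Eventually.of_forall fun t x hx => norm_smul_comp_sub_le hκ hu' ?_ t)
    (hgint.const_mul _)
    (Eventually.of_forall fun t x _ => ?_)
  · rw [Metric.mem_ball, dist_eq_norm] at hx
    linarith [norm_le_norm_add_norm_sub' x x₀]
  · exact ((hu1.differentiable one_ne_zero (x - t)).hasFDerivAt.comp x
      ((hasFDerivAt_id x).sub_const t)).const_smul (g t)

end WeightedConvolution

section DerivativeSeries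

variable {d : ℕ} {E : Type*} [NormedAddCommGroup E] [NormedSpace ℂ E]
  {μ : Measure (Rd d)} {g : (Fin d → ℕ) → Rd d → ℂ} {f : Rd d → E} {κ : ℝ} {C c : ℕ → ℝ}
  {w : (Fin d → ℕ) → ℝ}

/-- For `γ = 0` this is the series `F` of the theorem; in general it is `∂^γ F`. -/
def derivSeries (μ : Measure (Rd d)) (g : (Fin d → ℕ) → Rd d → ℂ) (f : Rd d → E)
    (γ : Fin d → ℕ) (x : Rd d) : E :=
  ∑' α, ∫ t, g α t • pD (α + γ) f (x - t) ∂μ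

/-- `weight_le` is what (M.2) provides: the growth constant of `∂^{α+γ} f` splits into a factor
depending on `|γ|` only and the `α`-th term `w α` of a convergent series. -/
structure DerivSeriesBounds (μ : Measure (Rd d)) (g : (Fin d → ℕ) → Rd d → ℂ) (f : Rd d → E)
    (κ : ℝ) (C c : ℕ → ℝ) (w : (Fin d → ℕ) → ℝ) : Prop where
  nonneg : 0 ≤ κ
  contDiff : ContDiff ℝ ∞ f
  norm_pD_le : ∀ δ y, ‖pD δ f y‖ ≤ C (msize δ) * Real.exp (κ * ‖y‖)
  continuous : ∀ α, Continuous (g α)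
  integrable : ∀ α, Integrable (fun t => ‖g α t‖ * Real.exp (κ * ‖t‖)) μ
  weight_le : ∀ α n, C (msize α + n) * ∫ t, ‖g α t‖ * Real.exp (κ * ‖t‖) ∂μ ≤ c n * w α
  summable : Summable w

namespace DerivSeriesBounds

theorem integral_norm_smul_comp_sub_le_weight {F : Type*} [NormedAddCommGroup F]
    [NormedSpace ℂ F] (hB : DerivSeriesBounds μ g f κ C c w) {α : Fin d → ℕ} {n : ℕ} {k : ℝ}
    (hk : 0 ≤ k) {u : Rd d → F} (huc : Continuous u)
    (hu : ∀ y, ‖u y‖ ≤ k * C (msize α + n) * Real.exp (κ * ‖y‖)) {x : Rd d} {R : ℝ}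
    (hx : ‖x‖ ≤ R) :
    ∫ t, ‖g α t • u (x - t)‖ ∂μ ≤ k * c n * Real.exp (κ * R) * w α := by
  calc ∫ t, ‖g α t • u (x - t)‖ ∂μ
      ≤ k * C (msize α + n) * Real.exp (κ * R) * ∫ t, ‖g α t‖ * Real.exp (κ * ‖t‖) ∂μ :=
        integral_norm_smul_comp_sub_le hB.nonneg (hB.continuous α) (hB.integrable α) huc hu hx
    _ = k * Real.exp (κ * R) * (C (msize α + n) * ∫ t, ‖g α t‖ * Real.exp (κ * ‖t‖) ∂μ) := by
        ring
    _ ≤ k * Real.exp (κ * R) * (c n * w α) :=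
        mul_le_mul_of_nonneg_left (hB.weight_le α n) (by positivity)
    _ = k * c n * Real.exp (κ * R) * w α := by ring

theorem integral_norm_smul_pD_le (hB : DerivSeriesBounds μ g f κ C c w) (α γ : Fin d → ℕ)
    {x : Rd d} {R : ℝ} (hx : ‖x‖ ≤ R) :
    ∫ t, ‖g α t • pD (α + γ) f (x - t)‖ ∂μ ≤ c (msize γ) * Real.exp (κ * R) * w α := by
  simpa using hB.integral_norm_smul_comp_sub_le_weight zero_le_one
    (contDiff_pD hB.contDiff _).continuous
    (fun y => by simpa [msize_add] using hB.norm_pD_le (α + γ) y) hx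

theorem norm_integral_smul_fderiv_pD_le (hB : DerivSeriesBounds μ g f κ C c w)
    (α γ : Fin d → ℕ) {x : Rd d} {R : ℝ} (hx : ‖x‖ ≤ R) :
    ‖∫ t, g α t • fderiv ℝ (pD (α + γ) f) (x - t) ∂μ‖ ≤
      d * c (msize γ + 1) * Real.exp (κ * R) * w α :=
  (norm_integral_le_integral_norm _).trans <|
    hB.integral_norm_smul_comp_sub_le_weight (Nat.cast_nonneg d)
      ((contDiff_pD hB.contDiff _).continuous_fderiv (by simp))
      (fun y => by
        simpa [msize_add, add_assoc] using norm_fderiv_pD_le hB.contDiff hB.norm_pD_le (α + γ) y)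
      hx

theorem summable_integral_norm_smul_pD (hB : DerivSeriesBounds μ g f κ C c w)
    (γ : Fin d → ℕ) (x : Rd d) :
    Summable fun α => ∫ t, ‖g α t • pD (α + γ) f (x - t)‖ ∂μ :=
  (hB.summable.mul_left _).of_nonneg_of_le (fun _ => integral_nonneg fun _ => norm_nonneg _)
    fun α => hB.integral_norm_smul_pD_le α γ le_rfl

theorem norm_derivSeries_le (hB : DerivSeriesBounds μ g f κ C c w) (γ : Fin d → ℕ) (x : Rd d) :
    ‖derivSeries μ g f γ x‖ ≤ c (msize γ) * Real.exp (κ * ‖x‖) * ∑' α, w α := by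
  have hterm : ∀ α, ‖∫ t, g α t • pD (α + γ) f (x - t) ∂μ‖ ≤
      c (msize γ) * Real.exp (κ * ‖x‖) * w α := fun α =>
    (norm_integral_le_integral_norm _).trans (hB.integral_norm_smul_pD_le α γ le_rfl)
  have hsum := (hB.summable.mul_left _).of_nonneg_of_le (fun _ => norm_nonneg _) hterm
  calc ‖derivSeries μ g f γ x‖
      ≤ ∑' α, ‖∫ t, g α t • pD (α + γ) f (x - t) ∂μ‖ := norm_tsum_le_tsum_norm hsum
    _ ≤ ∑' α, c (msize γ) * Real.exp (κ * ‖x‖) * w α :=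
        hsum.tsum_le_tsum hterm (hB.summable.mul_left _)
    _ = c (msize γ) * Real.exp (κ * ‖x‖) * ∑' α, w α := tsum_mul_left

variable [CompleteSpace E]

theorem hasFDerivAt_derivSeries (hB : DerivSeriesBounds μ g f κ C c w) (γ : Fin d → ℕ)
    (x₀ : Rd d) :
    HasFDerivAt (derivSeries μ g f γ)
      (∑' α, ∫ t, g α t • fderiv ℝ (pD (α + γ) f) (x₀ - t) ∂μ) x₀ := by
  have hx₀ : x₀ ∈ Metric.ball (0 : Rd d) (‖x₀‖ + 1) := by simp
  have hball : ∀ x ∈ Metric.ball (0 : Rd d) (‖x₀‖ + 1), ‖x‖ ≤ ‖x₀‖ + 1 := fun x hx =>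
    (mem_ball_zero_iff.1 hx).le
  exact hasFDerivAt_tsum_of_isPreconnected (hB.summable.mul_left _) Metric.isOpen_ball
    (convex_ball _ _).isPreconnected
    (fun α x _ => hasFDerivAt_integral_smul_comp_sub hB.nonneg (hB.continuous α)
      (hB.integrable α) ((contDiff_pD hB.contDiff _).of_le (by simp)) (hB.norm_pD_le _)
      (norm_fderiv_pD_le hB.contDiff hB.norm_pD_le _) x)
    (fun α x hx => hB.norm_integral_smul_fderiv_pD_le α γ (hball x hx)) hx₀
    (Summable.of_norm_bounded (hB.summable.mul_left _) fun α =>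
      (norm_integral_le_integral_norm _).trans (hB.integral_norm_smul_pD_le α γ (hball x₀ hx₀)))
    hx₀

theorem dop_derivSeries (hB : DerivSeriesBounds μ g f κ C c w) (γ : Fin d → ℕ) (j : Fin d) :
    dop j (derivSeries μ g f γ) = derivSeries μ g f (γ + Pi.single j 1) := by
  funext x
  have hsum : Summable fun α => ∫ t, g α t • fderiv ℝ (pD (α + γ) f) (x - t) ∂μ :=
    Summable.of_norm_bounded (hB.summable.mul_left _) fun α =>
      hB.norm_integral_smul_fderiv_pD_le α γ le_rfl
  rw [dop, (hB.hasFDerivAt_derivSeries γ x).fderiv, ← ContinuousLinearMap.apply_apply (𝕜 := ℝ),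
    ContinuousLinearMap.map_tsum _ hsum]
  refine tsum_congr fun α => ?_
  have hint : Integrable (fun t => g α t • fderiv ℝ (pD (α + γ) f) (x - t)) μ :=
    integrable_smul_comp_sub hB.nonneg (hB.continuous α) (hB.integrable α)
      ((contDiff_pD hB.contDiff _).continuous_fderiv (by simp))
      (norm_fderiv_pD_le hB.contDiff hB.norm_pD_le _) x
  rw [ContinuousLinearMap.apply_apply, ContinuousLinearMap.integral_apply hint, ← add_assoc,
    ← dop_pD hB.contDiff]
  rfl

theorem contDiff_derivSeries (hB : DerivSeriesBounds μ g f κ C c w) (γ : Fin d → ℕ) :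
    ContDiff ℝ ∞ (derivSeries μ g f γ) :=
  contDiff_of_dop_eq (fun γ x => (hB.hasFDerivAt_derivSeries γ x).differentiableAt)
    hB.dop_derivSeries γ

theorem pD_derivSeries_zero (hB : DerivSeriesBounds μ g f κ C c w) (β : Fin d → ℕ) :
    pD β (derivSeries μ g f 0) = derivSeries μ g f β := by
  rw [pD_of_dop_eq hB.dop_derivSeries, zero_add]

end DerivSeriesBounds

end DerivativeSeries

theorem norm_pD_le_of_weighted_bound {d : ℕ} {E : Type*} [NormedAddCommGroup E]
    [NormedSpace ℝ E] {f : Rd d → E} {M : ℕ → ℝ} {h κ Cf : ℝ} (hh : 0 < h)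
    (hfb : ∀ α x, h ^ msize α * ‖pD α f x‖ * Real.exp (-κ * ‖x‖) ≤ Cf * M (msize α))
    (α : Fin d → ℕ) (x : Rd d) :
    ‖pD α f x‖ ≤ Cf * M (msize α) / h ^ msize α * Real.exp (κ * ‖x‖) := by
  have hexp : Real.exp (-κ * ‖x‖) * Real.exp (κ * ‖x‖) = 1 := by
    rw [← Real.exp_add]; simp
  rw [div_mul_eq_mul_div, le_div_iff₀ (pow_pos hh _)]
  calc ‖pD α f x‖ * h ^ msize α
      = h ^ msize α * ‖pD α f x‖ * Real.exp (-κ * ‖x‖) * Real.exp (κ * ‖x‖) := by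
        linear_combination -(h ^ msize α * ‖pD α f x‖) * hexp
    _ ≤ Cf * M (msize α) * Real.exp (κ * ‖x‖) :=
        mul_le_mul_of_nonneg_right (hfb α x) (Real.exp_pos _).le

theorem HasM2.weight_add_le {M : ℕ → ℝ} {C₀ H : ℝ} (hM2 : HasM2 M C₀ H) {h Cf I : ℝ}
    (hh : 0 < h) (hCf : 0 ≤ Cf) (hI : 0 ≤ I) (p q : ℕ) :
    Cf * M (p + q) / h ^ (p + q) * I ≤ C₀ * Cf * M q * (H / h) ^ q * (M p * I * (H / h) ^ p) := by
  calc Cf * M (p + q) / h ^ (p + q) * I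
      ≤ Cf * (C₀ * H ^ (p + q) * M p * M q) / h ^ (p + q) * I := by
        gcongr; exact hM2.2.2 p q
    _ = C₀ * Cf * M q * (H / h) ^ q * (M p * I * (H / h) ^ p) := by
        rw [div_pow, div_pow, pow_add, pow_add]
        field_simp

theorem pow_div_mul_mul_exp_neg_le {h H κ C₀ Cf m S r v : ℝ} {n : ℕ} (hh : 0 < h) (hH : 0 < H)
    (hv : v ≤ C₀ * Cf * m * (H / h) ^ n * Real.exp (κ * r) * S) :
    (h / H) ^ n * v * Real.exp (-κ * r) ≤ C₀ * S * Cf * m := by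
  have hHh : (h / H) ^ n * (H / h) ^ n = 1 := by
    rw [← mul_pow, div_mul_div_comm, mul_comm h H, div_self (by positivity), one_pow]
  have hexp : Real.exp (κ * r) * Real.exp (-κ * r) = 1 := by
    rw [← Real.exp_add]; simp
  calc (h / H) ^ n * v * Real.exp (-κ * r)
      ≤ (h / H) ^ n * (C₀ * Cf * m * (H / h) ^ n * Real.exp (κ * r) * S) * Real.exp (-κ * r) := by
        gcongr
    _ = C₀ * S * Cf * m := by
        linear_combination (C₀ * S * Cf * m) * ((h / H) ^ n * (H / h) ^ n * hexp + hHh)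

/-- Convolution of an ultrapolynomial-type series of derivatives against a vector-valued
function in `𝒬^{M,h}_κ(ℝ^d;E)` (Proposition 5.7, Banach case): the series converges
absolutely, defines a smooth function, and satisfies the expected bound. -/
theorem stmt12 (d : ℕ) (M : ℕ → ℝ) (C₀ H : ℝ) (hM : IsWeightSeq M) (hM2 : HasM2 M C₀ H)
    (h κ : ℝ) (hh : 0 < h) (hκ : 0 < κ)
    {E : Type*} [NormedAddCommGroup E] [NormedSpace ℂ E] [CompleteSpace E]
    (f : Rd d → E) (hf : ContDiff ℝ (⊤ : ℕ∞) f)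
    (Cf : ℝ)
    (hfb : ∀ (α : Fin d → ℕ) (x : Rd d),
      h ^ msize α * ‖pD α f x‖ * Real.exp (-κ * ‖x‖) ≤ Cf * M (msize α))
    (gα : (Fin d → ℕ) → Rd d → ℂ) (hgc : ∀ α, Continuous (gα α))
    (hgint : ∀ α : Fin d → ℕ,
      Integrable (fun t : Rd d => ‖gα α t‖ * Real.exp (κ * ‖t‖)))
    (hS : Summable (fun α : Fin d → ℕ =>
      M (msize α) * (∫ t : Rd d, ‖gα α t‖ * Real.exp (κ * ‖t‖)) * (H / h) ^ msize α)) :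
    (∀ (α : Fin d → ℕ) (x : Rd d),
      Integrable (fun t : Rd d => gα α t • pD α f (x - t))) ∧
    (∀ x : Rd d, Summable (fun α : Fin d → ℕ =>
      ∫ t : Rd d, ‖gα α t • pD α f (x - t)‖)) ∧
    ContDiff ℝ (⊤ : ℕ∞)
      (fun x : Rd d => ∑' α : Fin d → ℕ, ∫ t : Rd d, gα α t • pD α f (x - t)) ∧
    ∀ (β : Fin d → ℕ) (x : Rd d),
      (h / H) ^ msize β *
          ‖pD β (fun y : Rd d =>
            ∑' α : Fin d → ℕ, ∫ t : Rd d, gα α t • pD α f (y - t)) x‖ *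
        Real.exp (-κ * ‖x‖) ≤
      C₀ * (∑' α : Fin d → ℕ,
          M (msize α) * (∫ t : Rd d, ‖gα α t‖ * Real.exp (κ * ‖t‖)) * (H / h) ^ msize α) *
        Cf * M (msize β) := by
  have hCf : 0 ≤ Cf := (mul_nonneg_iff_of_pos_right (hM.1 _)).1 ((hfb 0 0).trans' (by positivity))
  have hB : DerivSeriesBounds volume gα f κ (fun n => Cf * M n / h ^ n)
      (fun n => C₀ * Cf * M n * (H / h) ^ n)
      (fun α => M (msize α) * (∫ t : Rd d, ‖gα α t‖ * Real.exp (κ * ‖t‖)) * (H / h) ^ msize α) :=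
    ⟨hκ.le, hf, norm_pD_le_of_weighted_bound hh hfb, hgc, hgint,
      fun α n => hM2.weight_add_le hh hCf (integral_nonneg fun _ => by positivity) _ _, hS⟩
  have hF : (fun x : Rd d => ∑' α : Fin d → ℕ, ∫ t : Rd d, gα α t • pD α f (x - t)) =
      derivSeries volume gα f 0 := by
    funext x; simp [derivSeries]
  refine ⟨fun α x => integrable_smul_comp_sub hκ.le (hgc α) (hgint α)
      (contDiff_pD hf α).continuous (hB.norm_pD_le α) x,
    fun x => by simpa using hB.summable_integral_norm_smul_pD 0 x,
    hF ▸ hB.contDiff_derivSeries 0, fun β x => ?_⟩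
  rw [hF, hB.pD_derivSeries_zero]
  exact pow_div_mul_mul_exp_neg_le hh (zero_lt_one.trans_le hM2.2.1) (hB.norm_derivSeries_le β x)
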